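/- Let d = diag(u₁², …, u_I²) with u_α > 0, let v ∈ ℝ^I, g ≥ 0, and b = g·|v⟩⟨v|. Define E = ( (d)^{1/2}(d+2b)(d)^{1/2} )^{1/2} (i.e., E = [d^{1/2}(d+2b)d^{1/2}]^{1/2}). Then tr E − tr d = (1/π) ∫_{0}^{∞} log( 1 + 2g·Σ_{α=1}^{I} u_α² v_α² / (u_α⁴ + λ²) ) dλ. -/

import Mathlib

open Matrix Real

/-- The square root of a positive semidefinite matrix, as defined in the older Mathlib
(`Matrix.PosSemidef.sqrt`, since removed). -/
noncomputable def Matrix.PosSemidef.sqrt {n 𝕜 : Type*} [Fintype n] [RCLike 𝕜] [PartialOrder 𝕜] [DecidableEq n]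
    {A : Matrix n n 𝕜} (hA : A.PosSemidef) : Matrix n n 𝕜 :=
  hA.1.eigenvectorUnitary.1 * diagonal ((↑) ∘ (√·) ∘ hA.1.eigenvalues) *
    (star hA.1.eigenvectorUnitary : Matrix n n 𝕜)

/-!
Integrating by parts against the antiderivative `x log (c + x²) - 2x + 2√c arctan (x / √c)` of
`log (c + x²)` gives `∫₀^∞ (log (μ + x²) - log (ν + x²)) dx = π (√μ - √ν)` for `μ, ν > 0`.
Summed over the eigenvalues of positive definite `A` and `B`, this reads
`π (tr √A - tr √B) = ∫₀^∞ log (det (A + x²) / det (B + x²)) dx`.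
For `A = d^{1/2} (d + 2b) d^{1/2} = d² + 2g |d^{1/2}v⟩⟨d^{1/2}v|` and `B = d²` we have
`tr √B = tr d`, and the matrix determinant lemma turns the ratio of determinants into
`1 + 2g ∑ u_α² v_α² / (u_α⁴ + x²)`.
-/

open MeasureTheory Set Filter Topology

namespace Real

theorem abs_log_sub_log_le_abs_sub_div_min {x y : ℝ} (hx : 0 < x) (hy : 0 < y) :
    |log x - log y| ≤ |x - y| / min x y := by
  wlog hyx : y ≤ x generalizing x y
  · rw [abs_sub_comm, abs_sub_comm x, min_comm]
    exact this hy hx (le_of_not_ge hyx)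
  rw [min_eq_right hyx, abs_of_nonneg (sub_nonneg.2 (log_le_log hy hyx)),
    abs_of_nonneg (sub_nonneg.2 hyx), ← log_div hx.ne' hy.ne']
  calc log (x / y) ≤ x / y - 1 := log_le_sub_one_of_pos (div_pos hx hy)
    _ = (x - y) / y := by field_simp

theorem abs_log_add_sq_sub_log_add_sq_le {a b : ℝ} (ha : 0 < a) (hb : 0 < b) (x : ℝ) :
    |log (a + x ^ 2) - log (b + x ^ 2)| ≤ |a - b| / (min a b + x ^ 2) := by
  have h := abs_log_sub_log_le_abs_sub_div_min (x := a + x ^ 2) (y := b + x ^ 2)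
    (by positivity) (by positivity)
  rwa [add_sub_add_right_eq_sub, min_add_add_right] at h

theorem integrable_inv_add_sq {c : ℝ} (hc : 0 < c) :
    Integrable fun x : ℝ => (c + x ^ 2)⁻¹ := by
  have hsc : √c ≠ 0 := (sqrt_pos.2 hc).ne'
  refine ((integrable_inv_one_add_sq.comp_div hsc).const_mul c⁻¹).congr
    (Eventually.of_forall fun x => ?_)
  simp only
  field_simp
  rw [sq_sqrt hc.le]

theorem integrableOn_log_add_sq_sub_log_add_sq {a b : ℝ} (ha : 0 < a) (hb : 0 < b) :
    IntegrableOn (fun x : ℝ => log (a + x ^ 2) - log (b + x ^ 2)) (Ioi 0) := by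
  have hcont : Continuous fun x : ℝ => log (a + x ^ 2) - log (b + x ^ 2) := by
    refine .sub (.log (by fun_prop) fun x => ?_) (.log (by fun_prop) fun x => ?_) <;> positivity
  refine ((integrable_inv_add_sq (lt_min ha hb)).const_mul |a - b|).integrableOn.mono'
    hcont.aestronglyMeasurable.restrict (Eventually.of_forall fun x => ?_)
  rw [norm_eq_abs, ← div_eq_mul_inv]
  exact abs_log_add_sq_sub_log_add_sq_le ha hb x

theorem hasDerivAt_mul_log_add_sq {c : ℝ} (hc : 0 < c) (x : ℝ) :
    HasDerivAt (fun x => x * log (c + x ^ 2) - 2 * x + 2 * √c * arctan (x / √c))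
      (log (c + x ^ 2)) x := by
  have hsc : √c ≠ 0 := (sqrt_pos.2 hc).ne'
  have hcx : c + x ^ 2 ≠ 0 := by positivity
  have hlog : HasDerivAt (fun x => log (c + x ^ 2)) (2 * x / (c + x ^ 2)) x := by
    simpa using ((hasDerivAt_pow 2 x).const_add c).log hcx
  have harctan :
      HasDerivAt (fun x => arctan (x / √c)) (1 / (1 + (x / √c) ^ 2) * (1 / √c)) x :=
    (hasDerivAt_arctan _).comp x (by simpa using (hasDerivAt_id' x).div_const √c)
  refine ((((hasDerivAt_id' x).mul hlog).sub ((hasDerivAt_id' x).const_mul 2)).add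
    (harctan.const_mul (2 * √c))).congr_deriv ?_
  field_simp
  rw [sq_sqrt hc.le]
  ring

theorem tendsto_mul_log_add_sq_sub_log_add_sq {a b : ℝ} (ha : 0 < a) (hb : 0 < b) :
    Tendsto (fun x => x * (log (a + x ^ 2) - log (b + x ^ 2))) atTop (𝓝 0) := by
  refine squeeze_zero_norm' ?_ ((tendsto_const_nhds (x := |a - b|)).div_atTop tendsto_id)
  filter_upwards [eventually_gt_atTop 0] with x hx
  calc ‖x * (log (a + x ^ 2) - log (b + x ^ 2))‖ ≤ x * (|a - b| / (min a b + x ^ 2)) := by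
        rw [norm_mul, norm_of_nonneg hx.le, norm_eq_abs]
        gcongr
        exact abs_log_add_sq_sub_log_add_sq_le ha hb x
    _ ≤ x * (|a - b| / x ^ 2) := by gcongr; exact le_add_of_nonneg_left (le_min ha.le hb.le)
    _ = |a - b| / id x := by rw [id]; field_simp

theorem integral_log_add_sq_sub_log_add_sq {a b : ℝ} (ha : 0 < a) (hb : 0 < b) :
    ∫ x in Ioi 0, (log (a + x ^ 2) - log (b + x ^ 2)) = π * (√a - √b) := by
  set F : ℝ → ℝ → ℝ := fun c x =>
    x * log (c + x ^ 2) - 2 * x + 2 * √c * arctan (x / √c)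
  have hderiv (x : ℝ) :
      HasDerivAt (fun x => F a x - F b x) (log (a + x ^ 2) - log (b + x ^ 2)) x :=
    (hasDerivAt_mul_log_add_sq ha x).sub (hasDerivAt_mul_log_add_sq hb x)
  have harctan {c : ℝ} (hc : 0 < c) :
      Tendsto (fun x => arctan (x / √c)) atTop (𝓝 (π / 2)) :=
    (tendsto_arctan_atTop.mono_right nhdsWithin_le_nhds).comp
      (tendsto_id.atTop_div_const (sqrt_pos.2 hc))
  have hlim : Tendsto (fun x => F a x - F b x) atTop (𝓝 (π * (√a - √b))) := by
    have := (tendsto_mul_log_add_sq_sub_log_add_sq ha hb).add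
      (((harctan ha).const_mul (2 * √a)).sub ((harctan hb).const_mul (2 * √b)))
    convert this using 1
    · ext x; simp only [F]; ring
    · congr 1; ring
  rw [integral_Ioi_of_hasDerivAt_of_tendsto (hderiv 0).continuousAt.continuousWithinAt
    (fun x _ => hderiv x) (integrableOn_log_add_sq_sub_log_add_sq ha hb) hlim]
  simp [F]

end Real

namespace Matrix

variable {n : Type*} [Fintype n] [DecidableEq n]

theorem det_diagonal_add_vecMulVec {α : Type*} [Field α] {c : n → α} (hc : ∀ i, c i ≠ 0)
    (w z : n → α) :
    (diagonal c + vecMulVec w z).det = (∏ i, c i) * (1 + ∑ i, w i * z i / c i) := by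
  have hfactor :
      diagonal c + vecMulVec w z = diagonal c * (1 + vecMulVec (fun i => w i / c i) z) := by
    ext i j
    simp only [add_apply, diagonal_apply, vecMulVec_apply, diagonal_mul, one_apply, mul_add,
      mul_ite, mul_one, mul_zero, add_right_inj]
    have := hc i
    field_simp
  rw [hfactor, det_mul, det_diagonal, vecMulVec_eq Unit,
    det_one_add_replicateCol_mul_replicateRow, dotProduct]
  congr 2
  exact Finset.sum_congr rfl fun i _ => by ring

theorem IsHermitian.det_add_smul_one {A : Matrix n n ℝ} (hA : A.IsHermitian) (t : ℝ) :
    (A + t • 1).det = ∏ i, (hA.eigenvalues i + t) := by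
  have hcfc : A + t • 1 = cfc (· + t) A := by
    conv_lhs => rw [← cfc_id' ℝ A hA.isSelfAdjoint]
    rw [← Algebra.algebraMap_eq_smul_one,
      ← cfc_add_const t (fun x : ℝ => x) A (ha := hA.isSelfAdjoint)]
  rw [hcfc, hA.cfc_eq]
  simp [IsHermitian.cfc, -Unitary.conjStarAlgAut_apply]

theorem PosSemidef.sqrt_eq_cfc {A : Matrix n n ℝ} (hA : A.PosSemidef) :
    hA.sqrt = cfc Real.sqrt A := by
  rw [hA.1.cfc_eq]; rfl

theorem PosSemidef.trace_sqrt {A : Matrix n n ℝ} (hA : A.PosSemidef) :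
    hA.sqrt.trace = ∑ i, √(hA.1.eigenvalues i) := by
  rw [PosSemidef.sqrt, trace_mul_cycle, mem_unitaryGroup_iff'.mp hA.1.eigenvectorUnitary.2,
    Matrix.one_mul, trace_diagonal]
  simp

theorem PosSemidef.sqrt_diagonal {c : n → ℝ} (h : (diagonal c).PosSemidef) :
    h.sqrt = diagonal fun i => √(c i) := by
  set s : Matrix n n ℝ := diagonal fun i => √(c i)
  have hs : IsSelfAdjoint s := isHermitian_diagonal _
  have hsq : cfc (· ^ 2 : ℝ → ℝ) s = diagonal c := by
    rw [cfc_pow_id _ _ hs, diagonal_pow]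
    exact congrArg diagonal (funext fun i => sq_sqrt (posSemidef_diagonal_iff.1 h i))
  rw [h.sqrt_eq_cfc, ← hsq, ← cfc_comp' Real.sqrt (· ^ 2) s (ha := hs)]
  conv_rhs => rw [← cfc_id' ℝ s hs]
  refine cfc_congr fun x hx => ?_
  obtain ⟨i, rfl⟩ := spectrum_diagonal (R := ℝ) (fun i => √(c i)) ▸ hx
  exact sqrt_sq (sqrt_nonneg _)

theorem PosDef.integral_log_det_add_sq_div {A B : Matrix n n ℝ} (hA : A.PosDef)
    (hB : B.PosDef) :
    ∫ x in Ioi (0 : ℝ), log ((A + x ^ 2 • 1).det / (B + x ^ 2 • 1).det)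
      = π * (hA.posSemidef.sqrt.trace - hB.posSemidef.sqrt.trace) := by
  have hpos {C : Matrix n n ℝ} (hC : C.PosDef) (x : ℝ) (i : n) :
      0 < hC.isHermitian.eigenvalues i + x ^ 2 := by
    have := hC.eigenvalues_pos i; positivity
  have hlog (x : ℝ) : log ((A + x ^ 2 • 1).det / (B + x ^ 2 • 1).det)
      = ∑ i, (log (hA.isHermitian.eigenvalues i + x ^ 2)
        - log (hB.isHermitian.eigenvalues i + x ^ 2)) := by
    rw [hA.isHermitian.det_add_smul_one, hB.isHermitian.det_add_smul_one,
      log_div (Finset.prod_pos fun i _ => hpos hA x i).ne'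
        (Finset.prod_pos fun i _ => hpos hB x i).ne',
      log_prod fun i _ => (hpos hA x i).ne', log_prod fun i _ => (hpos hB x i).ne',
      Finset.sum_sub_distrib]
  simp_rw [hlog]
  rw [integral_finsetSum _ fun i _ =>
    integrableOn_log_add_sq_sub_log_add_sq (hA.eigenvalues_pos i) (hB.eigenvalues_pos i)]
  simp_rw [integral_log_add_sq_sub_log_add_sq (hA.eigenvalues_pos _) (hB.eigenvalues_pos _)]
  rw [hA.posSemidef.trace_sqrt, hB.posSemidef.trace_sqrt, ← Finset.sum_sub_distrib,
    Finset.mul_sum]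

end Matrix

/-- Let `d = diag(u₁²,…,u_I²)` with `u_α > 0`, `v ∈ ℝ^I`, `g ≥ 0`, `b = g·|v⟩⟨v|`, and
`E = [d^{1/2}(d+2b)d^{1/2}]^{1/2}`. Then
`tr E − tr d = (1/π)∫₀^∞ log(1 + 2g·Σ_α u_α²v_α²/(u_α⁴+λ²)) dλ`. -/
theorem trace_E_sub_trace_d {I : ℕ} (u v : Fin I → ℝ) (hu : ∀ α, 0 < u α)
    (g : ℝ) (hg : 0 ≤ g)
    (d b : Matrix (Fin I) (Fin I) ℝ)
    (hd : d = Matrix.diagonal (fun α => u α ^ 2))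
    (hb : b = g • vecMulVec v v)
    (hdp : d.PosSemidef)
    (h1 : (hdp.sqrt * (d + 2 • b) * hdp.sqrt).PosSemidef) :
    (h1.sqrt).trace - d.trace
      = (1 / π) * ∫ lam in Set.Ioi (0:ℝ),
          Real.log (1 + 2 * g * ∑ α, u α ^ 2 * v α ^ 2 / (u α ^ 4 + lam ^ 2)) := by
  subst hd hb
  set w : Fin I → ℝ := fun α => u α * v α
  set D : Matrix (Fin I) (Fin I) ℝ := diagonal fun α => u α ^ 4
  have hM : hdp.sqrt * (diagonal (fun α => u α ^ 2) + 2 • g • vecMulVec v v) * hdp.sqrt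
      = D + (2 * g) • vecMulVec w w := by
    rw [hdp.sqrt_diagonal]
    ext i j
    simp only [mul_diagonal, diagonal_mul, Matrix.add_apply, Matrix.smul_apply, vecMulVec_apply,
      diagonal_apply, smul_eq_mul, sqrt_sq (hu _).le, D, w]
    split_ifs with h
    · subst h; ring
    · ring
  have hD : D.PosDef := posDef_diagonal_iff.2 fun α => by have := hu α; positivity
  have hMpd : (D + (2 * g) • vecMulVec w w).PosDef :=
    hD.add_posSemidef ((posSemidef_vecMulVec_self_star w).smul (by positivity))
  have hD_sqrt : hD.posSemidef.sqrt = diagonal fun α => u α ^ 2 := by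
    rw [hD.posSemidef.sqrt_diagonal]
    exact congrArg diagonal <| funext fun α => by
      rw [show u α ^ 4 = (u α ^ 2) ^ 2 by ring, sqrt_sq (by positivity)]
  have hdet (x : ℝ) : (D + (2 * g) • vecMulVec w w + x ^ 2 • 1).det / (D + x ^ 2 • 1).det
      = 1 + 2 * g * ∑ α, u α ^ 2 * v α ^ 2 / (u α ^ 4 + x ^ 2) := by
    have hc (α) : u α ^ 4 + x ^ 2 ≠ 0 := by have := hu α; positivity
    have hshift : D + x ^ 2 • 1 = diagonal fun α => u α ^ 4 + x ^ 2 := by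
      rw [smul_one_eq_diagonal, diagonal_add]
    rw [add_right_comm, ← smul_vecMulVec, hshift, det_diagonal_add_vecMulVec hc, det_diagonal,
      mul_div_cancel_left₀ _ (Finset.prod_ne_zero_iff.2 fun α _ => hc α), Finset.mul_sum]
    congr 1
    exact Finset.sum_congr rfl fun α _ => by simp only [w, Pi.smul_apply, smul_eq_mul]; ring
  calc h1.sqrt.trace - (diagonal fun α => u α ^ 2).trace
      = hMpd.posSemidef.sqrt.trace - hD.posSemidef.sqrt.trace := by
        rw [hD_sqrt]
        congr 3
    _ = (1 / π) * ∫ x in Ioi (0 : ℝ),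
          log ((D + (2 * g) • vecMulVec w w + x ^ 2 • 1).det / (D + x ^ 2 • 1).det) := by
        rw [hMpd.integral_log_det_add_sq_div hD, one_div, inv_mul_cancel_left₀ pi_ne_zero]
    _ = _ := by simp_rw [hdet]
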